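/- Let V and W be oriented two-dimensional subspaces of ℝ⁴ with principal angles θ₁, θ₂, and let θ⊥ be the angle between V and W⊥ (defined via the inner product of the representing unit bivectors, with W⊥ oriented so that a positive basis of W followed by a positive basis of W⊥ is positively oriented in ℝ⁴). Then |cos θ⊥| = sin θ₁ · sin θ₂. -/

import Mathlib

/-! With `A = (⟪vᵢ, w'ⱼ⟫)`, the matrix `A Aᵀ` is the Gram matrix of the projections of `v₁, v₂`
onto `Wᗮ`, i.e. the identity minus the Gram matrix of their projections onto `W`. By polarizing the
principal-angle form, the latter is `U diag(cos² θᵢ) Uᵀ`, where `U = (⟪vᵢ, uⱼ⟫)` is the orthogonal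
change of basis to the principal vectors `u` of `V`. Hence `A Aᵀ = U diag(sin² θᵢ) Uᵀ` and
`(det A)² = sin² θ₁ sin² θ₂`. -/

noncomputable section
open Real
open scoped RealInnerProductSpace

abbrev E4 := EuclideanSpace ℝ (Fin 4)

/-- `θ₁ ≤ θ₂` are the principal angles between the planes `V` and `W` of `ℝ⁴`:
`cos²θ₁`, `cos²θ₂` are the eigenvalues of the quadratic form `v ↦ ‖p_W v‖²` on `V`. -/
def IsPrincipalAngles (V W : Submodule ℝ E4) (θ₁ θ₂ : ℝ) : Prop :=
  0 ≤ θ₁ ∧ θ₁ ≤ θ₂ ∧ θ₂ ≤ π / 2 ∧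
  ∃ v₁ v₂ : E4, v₁ ∈ V ∧ v₂ ∈ V ∧ ‖v₁‖ = 1 ∧ ‖v₂‖ = 1 ∧ ⟪v₁, v₂⟫ = 0 ∧
    ∀ v ∈ V, ‖(W.orthogonalProjectionOnto v : E4)‖ ^ 2 =
      Real.cos θ₁ ^ 2 * ⟪v, v₁⟫ ^ 2 + Real.cos θ₂ ^ 2 * ⟪v, v₂⟫ ^ 2

open Submodule Matrix

lemma Matrix.det_sq_eq_prod_one_sub_of_mul_transpose_eq {ι : Type*} [Fintype ι] [DecidableEq ι]
    {A U : Matrix ι ι ℝ} {k : ι → ℝ} (hU : Uᵀ * U = 1) (hA : A * Aᵀ = 1 - U * diagonal k * Uᵀ) :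
    A.det ^ 2 = ∏ i, (1 - k i) := by
  have hdiag : diagonal (1 - k) = 1 - diagonal k := by
    ext i j; by_cases h : i = j <;> simp [h]
  have hA' : A * Aᵀ = U * diagonal (1 - k) * Uᵀ := by
    rw [hA, hdiag, mul_sub, sub_mul, mul_one, mul_eq_one_comm.mp hU]
  calc A.det ^ 2 = (A * Aᵀ).det := by rw [det_mul, det_transpose, sq]
    _ = (Uᵀ * U).det * (diagonal (1 - k)).det := by
      rw [hA', det_mul, det_mul, det_mul, det_transpose]; ring
    _ = ∏ i, (1 - k i) := by rw [hU, det_one, one_mul, det_diagonal]; rfl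

section
variable {E : Type*} [NormedAddCommGroup E] [InnerProductSpace ℝ E]

lemma orthonormal_pair {e₁ e₂ : E} (h₁ : ‖e₁‖ = 1) (h₂ : ‖e₂‖ = 1) (h : ⟪e₁, e₂⟫ = 0) :
    Orthonormal ℝ ![e₁, e₂] := by
  rw [orthonormal_iff_ite]
  intro i j
  fin_cases i <;> fin_cases j <;> simp [h₁, h₂, h, real_inner_comm e₁]

lemma span_range_pair (e₁ e₂ : E) : span ℝ (Set.range ![e₁, e₂]) = span ℝ {e₁, e₂} := by
  simp [Matrix.range_cons, Set.pair_comm]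

variable {ι : Type*} [Fintype ι]

lemma Orthonormal.inner_eq_sum_of_mem_span {e : ι → E} (he : Orthonormal ℝ e) (x : E) {y : E}
    (hy : y ∈ span ℝ (Set.range e)) : ⟪x, y⟫ = ∑ i, ⟪x, e i⟫ * ⟪y, e i⟫ := by
  obtain ⟨c, rfl⟩ := (mem_span_range_iff_exists_fun ℝ).mp hy
  simp [he.inner_left_fintype, inner_sum, real_inner_smul_right, mul_comm]

lemma Orthonormal.inner_starProjection_eq_sum {K : Submodule ℝ E} [K.HasOrthogonalProjection]
    {e : ι → E} (he : Orthonormal ℝ e) (hK : K = span ℝ (Set.range e)) (x y : E) :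
    ⟪K.starProjection x, K.starProjection y⟫ = ∑ i, ⟪x, e i⟫ * ⟪y, e i⟫ := by
  have heK : ∀ i, K.starProjection (e i) = e i := fun i ↦
    starProjection_eq_self_iff.mpr (hK ▸ subset_span (Set.mem_range_self i))
  rw [he.inner_eq_sum_of_mem_span _ (hK ▸ K.starProjection_apply_mem y)]
  simp_rw [inner_starProjection_left_eq_right, heK]

lemma inner_starProjection_orthogonal (K : Submodule ℝ E) [K.HasOrthogonalProjection] (x y : E) :
    ⟪Kᗮ.starProjection x, Kᗮ.starProjection y⟫ =
      ⟪x, y⟫ - ⟪K.starProjection x, K.starProjection y⟫ := by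
  rw [inner_starProjection_left_eq_right, inner_starProjection_left_eq_right,
    starProjection_eq_self_iff.mpr (starProjection_apply_mem _ _),
    starProjection_eq_self_iff.mpr (starProjection_apply_mem _ _), starProjection_orthogonal]
  simp [inner_sub_right]

lemma inner_map_map_eq_sum_of_norm_sq_eq {F 𝓕 : Type*} [NormedAddCommGroup F]
    [InnerProductSpace ℝ F] [FunLike 𝓕 E F] [AddHomClass 𝓕 E F] (f : 𝓕) {V : Submodule ℝ E}
    {c : ι → ℝ} {u : ι → E} (hf : ∀ v ∈ V, ‖f v‖ ^ 2 = ∑ i, c i * ⟪v, u i⟫ ^ 2) {x y : E}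
    (hx : x ∈ V) (hy : y ∈ V) :
    ⟪f x, f y⟫ = ∑ i, c i * (⟪x, u i⟫ * ⟪y, u i⟫) := by
  have hxy := hf (x + y) (V.add_mem hx hy)
  rw [map_add, norm_add_sq_real, hf x hx, hf y hy] at hxy
  simp only [inner_add_left, add_sq, mul_add, Finset.sum_add_distrib] at hxy
  have hcross : ∑ i, c i * (2 * ⟪x, u i⟫ * ⟪y, u i⟫) =
      2 * ∑ i, c i * (⟪x, u i⟫ * ⟪y, u i⟫) := by
    rw [Finset.mul_sum]
    exact Finset.sum_congr rfl fun i _ ↦ by ring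
  linarith

variable [DecidableEq ι]

theorem det_inner_sq_eq_prod_sin_sq {V W : Submodule ℝ E} [W.HasOrthogonalProjection]
    {v w u : ι → E} {θ : ι → ℝ} (hv : Orthonormal ℝ v) (hw : Orthonormal ℝ w)
    (hu : Orthonormal ℝ u) (hV : V = span ℝ (Set.range v)) (hW : Wᗮ = span ℝ (Set.range w))
    (huV : ∀ i, u i ∈ V)
    (hθ : ∀ x ∈ V, ‖W.starProjection x‖ ^ 2 = ∑ i, cos (θ i) ^ 2 * ⟪x, u i⟫ ^ 2) :
    (of fun i j ↦ ⟪v i, w j⟫).det ^ 2 = ∏ i, sin (θ i) ^ 2 := by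
  have hvV : ∀ i, v i ∈ V := fun i ↦ hV ▸ subset_span (Set.mem_range_self i)
  have hgram : ∀ x ∈ V, ∀ y ∈ V, ∑ j, ⟪x, w j⟫ * ⟪y, w j⟫ =
      ⟪x, y⟫ - ∑ j, cos (θ j) ^ 2 * (⟪x, u j⟫ * ⟪y, u j⟫) := by
    intro x hx y hy
    rw [← hw.inner_starProjection_eq_sum hW, inner_starProjection_orthogonal,
      inner_map_map_eq_sum_of_norm_sq_eq W.starProjection hθ hx hy]
  have hU : (of fun i j ↦ ⟪v i, u j⟫)ᵀ * of (fun i j ↦ ⟪v i, u j⟫) = 1 := by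
    ext i j
    rw [one_apply, ← orthonormal_iff_ite.mp hu i j, hv.inner_eq_sum_of_mem_span _ (hV ▸ huV j)]
    simp [mul_apply, real_inner_comm]
  have hA : (of fun i j ↦ ⟪v i, w j⟫) * (of fun i j ↦ ⟪v i, w j⟫)ᵀ =
      1 - (of fun i j ↦ ⟪v i, u j⟫) * diagonal (fun j ↦ cos (θ j) ^ 2) *
        (of fun i j ↦ ⟪v i, u j⟫)ᵀ := by
    ext i j
    rw [Matrix.sub_apply, one_apply, ← orthonormal_iff_ite.mp hv i j]
    simp [mul_apply, diagonal_apply, hgram _ (hvV i) _ (hvV j), mul_left_comm, mul_assoc]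
  simpa [sin_sq] using det_sq_eq_prod_one_sub_of_mul_transpose_eq hU hA

end

theorem abs_cos_angle_perp_eq_prod_sin_principal_angles_general
    (V W : Submodule ℝ E4)
    (θ₁ θ₂ : ℝ) (h : IsPrincipalAngles V W θ₁ θ₂)
    (v₁ v₂ w₁' w₂' : E4)
    (hv₁ : ‖v₁‖ = 1) (hv₂ : ‖v₂‖ = 1) (hv : ⟪v₁, v₂⟫ = 0)
    (hVspan : V = Submodule.span ℝ {v₁, v₂})
    (hw₁ : ‖w₁'‖ = 1) (hw₂ : ‖w₂'‖ = 1) (hw : ⟪w₁', w₂'⟫ = 0)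
    (hWspan : Wᗮ = Submodule.span ℝ {w₁', w₂'}) :
    |⟪v₁, w₁'⟫ * ⟪v₂, w₂'⟫ - ⟪v₂, w₁'⟫ * ⟪v₁, w₂'⟫| = Real.sin θ₁ * Real.sin θ₂ := by
  obtain ⟨hθ₁, hθ₁₂, hθ₂, u₁, u₂, hu₁V, hu₂V, hu₁, hu₂, hu, hcos⟩ := h
  rw [← span_range_pair] at hVspan hWspan
  have hdet := det_inner_sq_eq_prod_sin_sq (θ := ![θ₁, θ₂]) (orthonormal_pair hv₁ hv₂ hv)
    (orthonormal_pair hw₁ hw₂ hw) (orthonormal_pair hu₁ hu₂ hu) hVspan hWspan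
    (by simp [Fin.forall_fin_two, hu₁V, hu₂V]) (by simpa [Fin.sum_univ_two] using hcos)
  have hsin : 0 ≤ sin θ₁ * sin θ₂ := mul_nonneg
    (sin_nonneg_of_nonneg_of_le_pi hθ₁ (by linarith [pi_pos]))
    (sin_nonneg_of_nonneg_of_le_pi (by linarith) (by linarith [pi_pos]))
  rw [← abs_of_nonneg hsin, ← sq_eq_sq_iff_abs_eq_abs]
  simpa [det_fin_two, Fin.prod_univ_two, mul_pow, mul_comm] using hdet

/-- If `θ₁, θ₂` are the principal angles between the planes `V` and `W`, and `θ⊥` is the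
angle between `V` and `Wᗮ` defined via the inner product of representing unit bivectors,
`cos θ⊥ = ⟪v₁ ∧ v₂, w₁' ∧ w₂'⟫` for orthonormal bases `(v₁,v₂)` of `V` and `(w₁',w₂')`
of `Wᗮ` (any orientation: the absolute value is orientation-independent), then
`|cos θ⊥| = sin θ₁ · sin θ₂`. -/
theorem abs_cos_angle_perp_eq_prod_sin_principal_angles
    (V W : Submodule ℝ E4) (hV : Module.finrank ℝ V = 2) (hW : Module.finrank ℝ W = 2)
    (θ₁ θ₂ : ℝ) (h : IsPrincipalAngles V W θ₁ θ₂)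
    (v₁ v₂ w₁' w₂' : E4)
    (hv₁ : ‖v₁‖ = 1) (hv₂ : ‖v₂‖ = 1) (hv : ⟪v₁, v₂⟫ = 0)
    (hVspan : V = Submodule.span ℝ {v₁, v₂})
    (hw₁ : ‖w₁'‖ = 1) (hw₂ : ‖w₂'‖ = 1) (hw : ⟪w₁', w₂'⟫ = 0)
    (hWspan : Wᗮ = Submodule.span ℝ {w₁', w₂'}) :
    |⟪v₁, w₁'⟫ * ⟪v₂, w₂'⟫ - ⟪v₂, w₁'⟫ * ⟪v₁, w₂'⟫| = Real.sin θ₁ * Real.sin θ₂ :=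
  abs_cos_angle_perp_eq_prod_sin_principal_angles_general V W θ₁ θ₂ h v₁ v₂ w₁' w₂' hv₁ hv₂ hv
    hVspan hw₁ hw₂ hw hWspan
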